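/- If h, f ∈ A and D(h) ⊆ D(f) (every real prime ideal containing f contains h), then there exist n ∈ ℕ, a sum of squares Σ x² in A, and u ∈ A such that h^{2n} + Σ x² = u·f. -/

import Mathlib

/-- An ideal `J` of a commutative ring is *real* if whenever a finite sum of squares
`∑ i, a i ^ 2` lies in `J`, each `a i` lies in `J`. -/
def IsRealIdeal {A : Type*} [CommRing A] (J : Ideal A) : Prop :=
  ∀ (n : ℕ) (a : Fin n → A), (∑ i, a i ^ 2) ∈ J → ∀ i, a i ∈ J

/-- The real Zariski spectrum: the set of real prime ideals of `A`. -/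
structure RealSpectrum (A : Type*) [CommRing A] where
  asIdeal : Ideal A
  isPrime : asIdeal.IsPrime
  isReal : IsRealIdeal asIdeal

namespace RealSpectrum

variable {A : Type*} [CommRing A]

instance (p : RealSpectrum A) : p.asIdeal.IsPrime := p.isPrime

/-- `V(I)`: the set of real prime ideals containing `I`. -/
def zeroLocus (I : Ideal A) : Set (RealSpectrum A) := {p | I ≤ p.asIdeal}

/-- `D(f)`: the set of real prime ideals not containing `f`. -/
def basicOpen (f : A) : Set (RealSpectrum A) := {p | f ∉ p.asIdeal}

end RealSpectrum

/-!
If no element `h ^ (2n) + σ` (with `σ` a sum of squares) is a multiple of `f`, then `(f)` is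
disjoint from the multiplicative set `S` of all such elements. An ideal containing `f` and maximal
among those disjoint from `S` is prime, and it is real because `S` is stable under adding sums of
squares: if `a ^ 2 + σ` lies in it but `a` does not, maximality gives `j + x a ∈ S` with `j` in the
ideal, and then `(j + x a) ^ 2 + x ^ 2 σ` lies both in `S` and in the ideal. This real prime
contains `f` but not `h`, contradicting `D(h) ⊆ D(f)`.
-/

section

variable {A : Type*} [CommRing A]

theorem IsSumSq.exists_eq_sum_sq {R : Type*} [Semiring R] {σ : R} (hσ : IsSumSq σ) :
    ∃ (k : ℕ) (x : Fin k → R), σ = ∑ i, x i ^ 2 := by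
  induction hσ with
  | zero => exact ⟨0, finZeroElim, by simp⟩
  | sq_add a _ ih =>
    obtain ⟨k, x, rfl⟩ := ih
    exact ⟨k + 1, Fin.cons a x, by simp [Fin.sum_univ_succ, sq]⟩

theorem isRealIdeal_of_forall_sq_add_mem {J : Ideal A}
    (hJ : ∀ a σ : A, IsSumSq σ → a ^ 2 + σ ∈ J → a ∈ J) : IsRealIdeal J := by
  intro n a hsum i
  refine hJ (a i) _ (IsSumSq.sum_sq (Finset.univ.erase i) a) ?_
  rwa [Finset.add_sum_erase Finset.univ (fun l ↦ a l ^ 2) (Finset.mem_univ i)]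

theorem Ideal.exists_le_maximal_disjoint (I : Ideal A) (S : Set A)
    (hIS : Disjoint (I : Set A) S) :
    ∃ J : Ideal A, I ≤ J ∧ Maximal (fun J : Ideal A ↦ Disjoint (J : Set A) S) J := by
  refine zorn_le_nonempty₀ _ (fun c hc hchain J hJ ↦ ?_) I hIS
  refine ⟨sSup c, Set.disjoint_left.mpr fun a ha ↦ ?_, fun _ ↦ le_sSup⟩
  obtain ⟨K, hKc, haK⟩ :=
    (Submodule.mem_sSup_of_directed ⟨J, hJ⟩ hchain.directedOn).mp ha
  exact Set.disjoint_left.mp (hc hKc) haK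

theorem isRealIdeal_of_maximal_disjoint {J : Ideal A} {S : Submonoid A}
    (hS : ∀ s ∈ S, ∀ σ, IsSumSq σ → s + σ ∈ S)
    (hJ : Maximal (fun J : Ideal A ↦ Disjoint (J : Set A) S) J) : IsRealIdeal J := by
  refine isRealIdeal_of_forall_sq_add_mem fun a σ hσ haσ ↦ by_contra fun ha ↦ ?_
  obtain ⟨s, hsJa, hsS⟩ := Set.not_disjoint_iff.mp
    (hJ.not_prop_of_gt (Submodule.lt_sup_iff_notMem.mpr ha : J < J ⊔ Ideal.span {a}))
  obtain ⟨j, hj, _, hx, rfl⟩ := Submodule.mem_sup.mp hsJa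
  obtain ⟨x, rfl⟩ := Ideal.mem_span_singleton'.mp hx
  have hmemJ : (j + x * a) ^ 2 + x ^ 2 * σ ∈ J := by
    have : (j + x * a) ^ 2 + x ^ 2 * σ = j * (j + 2 * x * a) + x ^ 2 * (a ^ 2 + σ) := by ring
    rw [this]
    exact J.add_mem (J.mul_mem_right _ hj) (J.mul_mem_left _ haσ)
  have hmemS : (j + x * a) ^ 2 + x ^ 2 * σ ∈ S :=
    hS _ (S.pow_mem hsS 2) _ ((IsSquare.sq x).isSumSq.mul hσ)
  exact Set.disjoint_left.mp hJ.prop hmemJ hmemS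

theorem RealSpectrum.exists_le_disjoint (I : Ideal A) (S : Submonoid A)
    (hS : ∀ s ∈ S, ∀ σ, IsSumSq σ → s + σ ∈ S) (hIS : Disjoint (I : Set A) S) :
    ∃ p : RealSpectrum A, I ≤ p.asIdeal ∧ Disjoint (p.asIdeal : Set A) S := by
  obtain ⟨J, hIJ, hJ⟩ := I.exists_le_maximal_disjoint S hIS
  have hprime : J.IsPrime :=
    Ideal.isPrime_of_maximally_disjoint J S hJ.prop fun _ ↦ hJ.not_prop_of_gt
  exact ⟨⟨J, hprime, isRealIdeal_of_maximal_disjoint hS hJ⟩, hIJ, hJ.prop⟩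

def evenPowAddSumSq (h : A) : Submonoid A where
  carrier := {a | ∃ (n : ℕ) (σ : A), IsSumSq σ ∧ a = h ^ (2 * n) + σ}
  one_mem' := ⟨0, 0, .zero, by simp⟩
  mul_mem' := by
    rintro _ _ ⟨n, σ, hσ, rfl⟩ ⟨m, τ, hτ, rfl⟩
    have hpow (k : ℕ) : IsSumSq (h ^ (2 * k)) := ((even_two_mul k).isSquare_pow h).isSumSq
    exact ⟨n + m, h ^ (2 * n) * τ + σ * h ^ (2 * m) + σ * τ,
      (((hpow n).mul hτ).add (hσ.mul (hpow m))).add (hσ.mul hτ), by ring⟩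

theorem add_mem_evenPowAddSumSq (h : A) :
    ∀ s ∈ evenPowAddSumSq h, ∀ σ, IsSumSq σ → s + σ ∈ evenPowAddSumSq h := by
  rintro _ ⟨n, τ, hτ, rfl⟩ σ hσ
  exact ⟨n, τ + σ, hτ.add hσ, by ring⟩

end

open RealSpectrum in
/-- If `D(h) ⊆ D(f)`, then `h ^ (2n) + ∑ x² = u * f` for some `n`, some sum of squares
`∑ x²`, and some `u ∈ A`. -/
theorem exists_of_basicOpen_subset {A : Type*} [CommRing A] (h f : A)
    (hsub : basicOpen h ⊆ basicOpen f) :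
    ∃ (n k : ℕ) (x : Fin k → A) (u : A), h ^ (2 * n) + ∑ i, x i ^ 2 = u * f := by
  by_contra! hne
  have hdisj : Disjoint ((Ideal.span {f} : Ideal A) : Set A) (evenPowAddSumSq h) := by
    refine Set.disjoint_right.mpr ?_
    rintro _ ⟨n, σ, hσ, rfl⟩ hmem
    obtain ⟨k, x, rfl⟩ := hσ.exists_eq_sum_sq
    obtain ⟨u, hu⟩ := Ideal.mem_span_singleton'.mp hmem
    exact hne n k x u hu.symm
  obtain ⟨p, hfp, hp⟩ := exists_le_disjoint _ _ (add_mem_evenPowAddSumSq h) hdisj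
  have hhp : p ∈ basicOpen h := fun hh ↦
    Set.disjoint_left.mp hp (p.asIdeal.pow_mem_of_mem hh 2 two_pos) ⟨1, 0, .zero, by ring⟩
  exact hsub hhp (hfp (Ideal.mem_span_singleton_self f))
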